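/- For every a = re^{iφ} with r ∈ {1/2, 1} and 0 < φ < π/2, and every compact set K ⊆ cl D that is norming for O(cl D), one has K ∩ ({a} × cl 𝔻) ≠ ∅. -/

import Mathlib

/-!
For `‖a‖ ∈ {1/2, 1}` the point `a` is a peak point of the closed annulus `1/2 ≤ |z| ≤ 1` for
functions holomorphic on `ℂ \ {0}`: `(1 + a/z)/2` on the inner circle and `(1 + ā z)/2` on the outer
one have modulus at most `1` on the annulus, with equality only at `z = a`. Composed with the first
projection, such a function lies in `O(cl D)` and attains its maximum modulus on `cl D` only over
`a`, so every compact norming set meets the fibre of `cl D` over `a`. Since `a` lies in the open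
first quadrant, that fibre is contained in `{a} × cl 𝔻`.
-/

open Set Complex

noncomputable section

/-- The bounded Hartogs domain `D ⊂ ℂ²` from the paper. -/
def domD : Set (ℂ × ℂ) :=
  {p | ∃ r φ : ℝ, 1 / 2 < r ∧ r < 1 ∧ 0 < φ ∧ φ < 2 * Real.pi ∧
    p.1 = (r : ℂ) * Complex.exp (φ * Complex.I) ∧
    (φ ≤ Real.pi / 2 → ‖p.2‖ < 1) ∧
    (Real.pi / 2 < φ → φ < 3 * Real.pi / 2 → ‖p.2‖ < 3) ∧
    (3 * Real.pi / 2 ≤ φ → 2 < ‖p.2‖ ∧ ‖p.2‖ < 3)}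

/-- `K` is norming for the family `F` of functions on `closure S`. -/
def IsNorming {E : Type*} [TopologicalSpace E] (S K : Set E) (F : Set (E → ℂ)) : Prop :=
  ∀ f ∈ F, sSup ((fun p => ‖f p‖) '' K) =
    sSup ((fun p => ‖f p‖) '' closure S)

/-- `O(cl S)`: functions extending holomorphically to an open neighborhood of `closure S`. -/
def Ocl {E : Type*} [NormedAddCommGroup E] [NormedSpace ℂ E] (S : Set E) :
    Set (E → ℂ) :=
  {f | ∃ U : Set E, IsOpen U ∧ closure S ⊆ U ∧ DifferentiableOn ℂ f U}

/-- `A(S)`: functions continuous on `closure S` and holomorphic on `S`. -/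
def Acl {E : Type*} [NormedAddCommGroup E] [NormedSpace ℂ E] (S : Set E) :
    Set (E → ℂ) :=
  {f | ContinuousOn f (closure S) ∧ DifferentiableOn ℂ f S}

/-- `K` is the minimal compact norming set for the family `F` on `closure S`
(i.e. the Shilov-type boundary associated with `F`). -/
def IsShilovFor {E : Type*} [NormedAddCommGroup E] [NormedSpace ℂ E]
    (S : Set E) (F : Set (E → ℂ)) (K : Set E) : Prop :=
  IsCompact K ∧ K ⊆ closure S ∧ IsNorming S K F ∧
    ∀ K' : Set E, IsCompact K' → K' ⊆ closure S → IsNorming S K' F → K ⊆ K'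

open ComplexConjugate

def closedAnnulus : Set ℂ :=
  {z | 1 / 2 ≤ ‖z‖ ∧ ‖z‖ ≤ 1}

lemma isClosed_closedAnnulus : IsClosed closedAnnulus :=
  (isClosed_le continuous_const continuous_norm).inter
    (isClosed_le continuous_norm continuous_const)

lemma ne_zero_of_mem_closedAnnulus {z : ℂ} (hz : z ∈ closedAnnulus) : z ≠ 0 := by
  rintro rfl
  norm_num [closedAnnulus] at hz

lemma norm_ofReal_mul_exp_mul_I {r : ℝ} (hr : 0 ≤ r) (φ : ℝ) :
    ‖(r : ℂ) * exp (φ * I)‖ = r := by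
  rw [norm_mul, norm_exp_ofReal_mul_I, mul_one, norm_real, Real.norm_of_nonneg hr]

lemma re_ofReal_mul_exp_mul_I (r φ : ℝ) : ((r : ℂ) * exp (φ * I)).re = r * Real.cos φ := by
  rw [re_ofReal_mul, exp_ofReal_mul_I_re]

lemma im_ofReal_mul_exp_mul_I (r φ : ℝ) : ((r : ℂ) * exp (φ * I)).im = r * Real.sin φ := by
  rw [im_ofReal_mul, exp_ofReal_mul_I_im]

lemma le_pi_div_two_of_sin_pos_of_cos_pos {φ : ℝ} (h₂π : φ < 2 * Real.pi)
    (hsin : 0 < Real.sin φ) (hcos : 0 < Real.cos φ) : φ ≤ Real.pi / 2 := by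
  by_contra! h
  rcases lt_or_ge φ (Real.pi + Real.pi / 2) with h' | h'
  · linarith [Real.cos_neg_of_pi_div_two_lt_of_lt h h']
  · have := Real.sin_neg_of_neg_of_neg_pi_lt (x := φ - 2 * Real.pi) (by linarith) (by linarith)
    rw [Real.sin_sub_two_pi] at this
    linarith

lemma fst_mem_closedAnnulus_of_mem_closure_domD {p : ℂ × ℂ} (hp : p ∈ closure domD) :
    p.1 ∈ closedAnnulus := by
  refine closure_minimal (t := Prod.fst ⁻¹' closedAnnulus) ?_
    (isClosed_closedAnnulus.preimage continuous_fst) hp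
  rintro q ⟨r, φ, hr₁, hr₂, -, -, hq, -⟩
  rw [mem_preimage, hq, closedAnnulus, mem_ofPred_eq, norm_ofReal_mul_exp_mul_I (by linarith)]
  constructor <;> linarith

lemma norm_snd_le_one_of_mem_closure_domD {p : ℂ × ℂ} (hp : p ∈ closure domD)
    (hre : 0 < p.1.re) (him : 0 < p.1.im) : ‖p.2‖ ≤ 1 := by
  have hclosed : IsClosed {p : ℂ × ℂ | 0 < p.1.re → 0 < p.1.im → ‖p.2‖ ≤ 1} := by
    simp only [imp_iff_not_or, not_lt, ofPred_or]
    refine .union ?_ (.union ?_ ?_) <;> exact isClosed_le (by fun_prop) continuous_const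
  refine closure_minimal ?_ hclosed hp hre him
  rintro q ⟨r, φ, hr₁, -, -, hφ₂π, hq, hsmall, -⟩ hqre hqim
  rw [hq, re_ofReal_mul_exp_mul_I] at hqre
  rw [hq, im_ofReal_mul_exp_mul_I] at hqim
  have hr : 0 < r := by linarith
  exact (hsmall (le_pi_div_two_of_sin_pos_of_cos_pos hφ₂π
    (pos_of_mul_pos_right hqim hr.le) (pos_of_mul_pos_right hqre hr.le))).le

lemma mk_zero_mem_closure_domD {r φ : ℝ} (hr : r ∈ Icc (1 / 2 : ℝ) 1) (hφ₀ : 0 < φ)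
    (hφ : φ ≤ Real.pi / 2) : ((r : ℂ) * exp (φ * I), (0 : ℂ)) ∈ closure domD := by
  have hmaps : MapsTo (fun t : ℝ => ((t : ℂ) * exp (φ * I), (0 : ℂ))) (Ioo (1 / 2) 1) domD :=
    fun t ht => ⟨t, φ, ht.1, ht.2, hφ₀, by linarith [Real.pi_pos], rfl, fun _ => by simp,
      fun h => absurd h (by linarith), fun h => absurd h (by linarith [Real.pi_pos])⟩
  refine map_mem_closure (f := fun t : ℝ => ((t : ℂ) * exp (φ * I), (0 : ℂ))) (by fun_prop)
    ?_ hmaps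
  rwa [closure_Ioo (by norm_num)]

lemma norm_one_add_div_two_le_one {u : ℂ} (hu : ‖u‖ ≤ 1) : ‖(1 + u) / 2‖ ≤ 1 := by
  rw [norm_div, RCLike.norm_ofNat, div_le_one two_pos]
  linarith [norm_add_le (1 : ℂ) u, norm_one (α := ℂ)]

lemma eq_one_of_norm_one_add_div_two_eq_one {u : ℂ} (hu : ‖u‖ ≤ 1) (h : ‖(1 + u) / 2‖ = 1) :
    u = 1 := by
  rw [norm_div, RCLike.norm_ofNat, div_eq_one_iff_eq two_ne_zero] at h
  have hnorm : ‖u‖ = 1 := by linarith [norm_add_le (1 : ℂ) u, norm_one (α := ℂ)]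
  exact (eq_of_norm_eq_of_norm_add_eq (by rw [norm_one, hnorm])
    (by rw [h, norm_one, hnorm]; norm_num)).symm

lemma exists_norm_le_one_eq_one_only_at {a : ℂ} (ha : ‖a‖ = 1 / 2 ∨ ‖a‖ = 1) :
    ∃ u : ℂ → ℂ, DifferentiableOn ℂ u {0}ᶜ ∧ u a = 1 ∧
      ∀ z ∈ closedAnnulus, ‖u z‖ ≤ 1 ∧ (u z = 1 → z = a) := by
  have ha₀ : a ≠ 0 := by rintro rfl; norm_num at ha
  rcases ha with ha | ha
  · refine ⟨fun z => a / z, fun z hz => (differentiableAt_const a).div differentiableAt_id hz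
      |>.differentiableWithinAt, div_self ha₀, fun z hz => ⟨?_, fun h => ?_⟩⟩
    · rw [norm_div, ha, div_le_one (by linarith [hz.1])]
      exact hz.1
    · exact ((div_eq_one_iff_eq (ne_zero_of_mem_closedAnnulus hz)).1 h).symm
  · have hconj : conj a * a = 1 := by
      rw [mul_comm, mul_conj, normSq_eq_norm_sq, ha]; norm_num
    refine ⟨fun z => conj a * z, (differentiable_id.const_mul _).differentiableOn, hconj,
      fun z hz => ⟨?_, fun h => ?_⟩⟩
    · rw [norm_mul, norm_conj, ha, one_mul]
      exact hz.2
    · exact mul_left_cancel₀ (by simpa using ha₀) (h.trans hconj.symm)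

lemma exists_peak_closedAnnulus {a : ℂ} (ha : ‖a‖ = 1 / 2 ∨ ‖a‖ = 1) :
    ∃ g : ℂ → ℂ, DifferentiableOn ℂ g {0}ᶜ ∧ g a = 1 ∧
      ∀ z ∈ closedAnnulus, ‖g z‖ ≤ 1 ∧ (‖g z‖ = 1 → z = a) := by
  obtain ⟨u, hu, hua, hupeak⟩ := exists_norm_le_one_eq_one_only_at ha
  refine ⟨fun z => (1 + u z) / 2, ((differentiableOn_const 1).add hu).div_const 2,
    by norm_num [hua], fun z hz => ⟨norm_one_add_div_two_le_one (hupeak z hz).1, fun h => ?_⟩⟩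
  exact (hupeak z hz).2 (eq_one_of_norm_one_add_div_two_eq_one (hupeak z hz).1 h)

lemma continuousOn_closure_of_mem_Ocl {E : Type*} [NormedAddCommGroup E] [NormedSpace ℂ E]
    {S : Set E} {f : E → ℂ} (hf : f ∈ Ocl S) : ContinuousOn f (closure S) :=
  let ⟨_, _, hSU, hfU⟩ := hf
  hfU.continuousOn.mono hSU

lemma exists_peak_closure_domD {a : ℂ} (ha : ‖a‖ = 1 / 2 ∨ ‖a‖ = 1) :
    ∃ f ∈ Ocl domD, f (a, 0) = 1 ∧
      ∀ p ∈ closure domD, ‖f p‖ ≤ 1 ∧ (‖f p‖ = 1 → p.1 = a) := by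
  obtain ⟨g, hg, hga, hgpeak⟩ := exists_peak_closedAnnulus ha
  have hU : IsOpen (Prod.fst ⁻¹' {0}ᶜ : Set (ℂ × ℂ)) :=
    isOpen_compl_singleton.preimage continuous_fst
  refine ⟨fun p => g p.1, ⟨_, hU, fun p hp => ?_, fun p hp => ?_⟩, hga, fun p hp =>
    hgpeak p.1 (fst_mem_closedAnnulus_of_mem_closure_domD hp)⟩
  · exact ne_zero_of_mem_closedAnnulus (fst_mem_closedAnnulus_of_mem_closure_domD hp)
  · exact ((hg.differentiableAt (isOpen_compl_singleton.mem_nhds hp)).comp p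
      differentiableAt_fst).differentiableWithinAt

lemma IsNorming.inter_nonempty_of_peak {E : Type*} [TopologicalSpace E]
    {S K T : Set E} {F : Set (E → ℂ)} {f : E → ℂ} {x : E}
    (hK : IsNorming S K F) (hKc : IsCompact K) (hKS : K ⊆ closure S) (hfF : f ∈ F)
    (hfK : ContinuousOn f K) (hx : x ∈ closure S) (hfx : ‖f x‖ = 1)
    (hf : ∀ p ∈ closure S, ‖f p‖ ≤ 1) (hpeak : ∀ p ∈ closure S, ‖f p‖ = 1 → p ∈ T) :
    (K ∩ T).Nonempty := by
  have hsup : sSup ((fun p => ‖f p‖) '' K) = 1 := by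
    rw [hK f hfF]
    exact IsGreatest.csSup_eq ⟨⟨x, hx, hfx⟩, forall_mem_image.2 hf⟩
  obtain rfl | hKne := K.eq_empty_or_nonempty
  · rw [image_empty, Real.sSup_empty] at hsup
    exact absurd hsup zero_ne_one
  obtain ⟨p, hpK, hp⟩ := (hKc.image_of_continuousOn hfK.norm).sSup_mem (hKne.image _)
  exact ⟨p, hpK, hpeak p (hKS hpK) (hp.trans hsup)⟩


theorem stmt19 (r φ : ℝ) (hr : r = 1 / 2 ∨ r = 1) (hφ₁ : 0 < φ) (hφ₂ : φ < Real.pi / 2)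
    (K : Set (ℂ × ℂ)) (hKc : IsCompact K) (hKsub : K ⊆ closure domD)
    (hKn : IsNorming domD K (Ocl domD)) :
    (K ∩ {p : ℂ × ℂ | p.1 = (r : ℂ) * Complex.exp (φ * Complex.I) ∧
      ‖p.2‖ ≤ 1}).Nonempty := by
  set a : ℂ := (r : ℂ) * exp (φ * I)
  have hr₀ : 0 < r := by rcases hr with rfl | rfl <;> norm_num
  have hre : 0 < a.re := by
    rw [re_ofReal_mul_exp_mul_I]
    exact mul_pos hr₀ (Real.cos_pos_of_mem_Ioo ⟨by linarith, hφ₂⟩)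
  have him : 0 < a.im := by
    rw [im_ofReal_mul_exp_mul_I]
    exact mul_pos hr₀ (Real.sin_pos_of_pos_of_lt_pi hφ₁ (by linarith))
  have ha : (a, (0 : ℂ)) ∈ closure domD :=
    mk_zero_mem_closure_domD (by rcases hr with rfl | rfl <;> norm_num) hφ₁ hφ₂.le
  obtain ⟨f, hfO, hfa, hfpeak⟩ := exists_peak_closure_domD (a := a) <| by
    rwa [norm_ofReal_mul_exp_mul_I hr₀.le]
  obtain ⟨p, hpK, hpa⟩ := hKn.inter_nonempty_of_peak (T := {q : ℂ × ℂ | q.1 = a}) hKc hKsub hfO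
    ((continuousOn_closure_of_mem_Ocl hfO).mono hKsub) ha (by rw [hfa, norm_one])
    (fun p hp => (hfpeak p hp).1) (fun p hp => (hfpeak p hp).2)
  exact ⟨p, hpK, hpa, norm_snd_le_one_of_mem_closure_domD (hKsub hpK) (hpa ▸ hre) (hpa ▸ him)⟩
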